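/- Every geometric poset P is isomorphic (as a ranked poset) to the poset of flats of a simple matroid scheme, and this simple matroid scheme is unique up to isomorphism: if M = (S, ρ) and M' = (S', ρ') are simple matroid schemes whose posets of flats are isomorphic, then there is a poset isomorphism ψ: S → S' with ρ(x) = ρ'(ψ(x)) for all x ∈ S. -/

import Mathlib

/-- The set of minimal upper bounds of `x` and `y` (denoted `x ∨ y` in the paper). -/
def mub {S : Type*} [PartialOrder S] (x y : S) : Set S :=
  {u | x ≤ u ∧ y ≤ u ∧ ∀ v, x ≤ v → y ≤ v → v ≤ u → v = u}

/-- The set of maximal lower bounds of `x` and `y` (denoted `x ∧ y` in the paper). -/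
def mlb {S : Type*} [PartialOrder S] (x y : S) : Set S :=
  {l | l ≤ x ∧ l ≤ y ∧ ∀ m, m ≤ x → m ≤ y → l ≤ m → m = l}

/-- The set of minimal upper bounds of a subset `T`. -/
def mubSet {S : Type*} [PartialOrder S] (T : Set S) : Set S :=
  {u | (∀ t ∈ T, t ≤ u) ∧ ∀ v, (∀ t ∈ T, t ≤ v) → v ≤ u → v = u}

/-- The number of atoms below `x`, i.e. `|x|`, the rank of `x` in a simplicial poset. -/
noncomputable def natRank {S : Type*} [PartialOrder S] [OrderBot S] (x : S) : ℕ :=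
  Nat.card {a : S // IsAtom a ∧ a ≤ x}

/-- A finite bounded-below poset is simplicial if every lower interval is isomorphic to
the Boolean lattice of subsets of the set of atoms below. -/
def IsSimplicialPoset (S : Type*) [PartialOrder S] [OrderBot S] [Fintype S] : Prop :=
  ∀ x : S, Nonempty (Set.Iic x ≃o Set {a : S // IsAtom a ∧ a ≤ x})

/-- A matroid scheme: a rank function `ρ` on a finite simplicial poset `S`
satisfying (M1)–(M5). -/
structure IsMatroidScheme {S : Type*} [PartialOrder S] [OrderBot S] [Fintype S]
    (ρ : S → ℕ) : Prop where
  simplicial : IsSimplicialPoset S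
  M1 : ∀ x : S, ρ x ≤ natRank x
  M2 : ∀ ⦃x y : S⦄, x ≤ y → ρ x ≤ ρ y
  M3 : ∀ x y u l : S, u ∈ mub x y → l ∈ mlb x y → ρ u + ρ l ≤ ρ x + ρ y
  M4 : ∀ x y l : S, l ∈ mlb x y → ρ x = ρ l → (mub x y).Nonempty
  M5 : ∀ x y : S, ρ x < ρ y →
    ∃ a : S, IsAtom a ∧ a ≤ y ∧ ¬ a ≤ x ∧ (mub x a).Nonempty

/-- `cl` is the closure operator of a matroid scheme `(S, ρ)`:
`cl x` is the greatest element above `x` of the same rank. -/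
def IsClosureFun {S : Type*} [PartialOrder S] (ρ : S → ℕ) (cl : S → S) : Prop :=
  ∀ x : S, x ≤ cl x ∧ ρ (cl x) = ρ x ∧ ∀ y : S, x ≤ y → ρ y = ρ x → y ≤ cl x

/-- The bases of a matroid scheme: the maximal independent elements. -/
def Bases {S : Type*} [PartialOrder S] [OrderBot S] (ρ : S → ℕ) : Set S :=
  {x | ρ x = natRank x ∧ ∀ w, ρ w = natRank w → x ≤ w → w = x}

/-- The circuits of a matroid scheme: the minimal dependent elements. -/
def Circuits {S : Type*} [PartialOrder S] [OrderBot S] (ρ : S → ℕ) : Set S :=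
  {x | ρ x < natRank x ∧ ∀ y, ρ y < natRank y → y ≤ x → y = x}

/-- `c` is the complement `x ∖ a` of `a` in the Boolean lattice `S_{≤ x}`. -/
def IsComplementIn {S : Type*} [PartialOrder S] [OrderBot S] (c a x : S) : Prop :=
  c ≤ x ∧ a ≤ x ∧ (∀ l : S, l ≤ c → l ≤ a → l = ⊥) ∧
    (∀ u : S, u ≤ x → c ≤ u → a ≤ u → u = x)

/-- The rank of a matroid scheme: the common value of `ρ` on maximal elements
(equal to the maximum value of `ρ`). -/
noncomputable def schemeRank {S : Type*} [Fintype S] (ρ : S → ℕ) : ℕ :=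
  sSup (Set.range ρ)

/-- The Tutte polynomial of a matroid scheme, as a two-variable integer function. -/
noncomputable def tutte {S : Type*} [PartialOrder S] [OrderBot S] [Fintype S]
    (ρ : S → ℕ) (x y : ℤ) : ℤ :=
  ∑ w : S, (x - 1) ^ (schemeRank ρ - ρ w) * (y - 1) ^ (natRank w - ρ w)

/-- An element of a poset is an order-atom if it covers a global minimum. -/
def OrdAtom {P : Type*} [PartialOrder P] (a : P) : Prop :=
  ∃ b : P, (∀ z : P, b ≤ z) ∧ b ⋖ a

/-- A partial order is a geometric lattice: it is bounded below, every pair has a least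
upper bound and greatest lower bound, it is atomistic, and it is (upper) semimodular. -/
def IsGeomLatOrder (P : Type*) [PartialOrder P] : Prop :=
  (∃ b : P, ∀ x : P, b ≤ x) ∧
  (∀ x y : P, ∃ u : P, IsLUB {x, y} u) ∧
  (∀ x y : P, ∃ l : P, IsGLB {x, y} l) ∧
  (∀ x : P, IsLUB {a : P | OrdAtom a ∧ a ≤ x} x) ∧
  (∀ x y m j : P, IsGLB {x, y} m → IsLUB {x, y} j → m ⋖ x → y ⋖ j)

/-- A geometric poset: a finite bounded-below poset with rank function `rk`
satisfying (G1) and (G2). -/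
def IsGeometricPoset (P : Type*) [PartialOrder P] [OrderBot P] [Fintype P]
    (rk : P → ℕ) : Prop :=
  rk ⊥ = 0 ∧
  (∀ ⦃x y : P⦄, x ≤ y → rk x ≤ rk y) ∧
  (∀ x y : P, x ⋖ y → rk y = rk x + 1) ∧
  (∀ m : P, IsMax m → IsGeomLatOrder (Set.Iic m)) ∧
  (∀ (x : P) (A : Set P), (∀ a ∈ A, IsAtom a) →
    ∀ y ∈ mubSet A, rk x < rk y → rk y = Nat.card A →
      ∃ a ∈ A, ¬ a ≤ x ∧ ∃ w : P, x ≤ w ∧ a ≤ w)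

/-!
For a geometric poset `P`, the realizing scheme lives on the pairs `(A, x)` of a set `A` of atoms
of `P` and a minimal upper bound `x` of `A`, ordered componentwise and ranked by `rk x`. Below a
maximal element `m` of `P`, minimal upper bounds are joins in the geometric lattice `[0̂, m]`.
Hence the lower intervals are Boolean, (M1) and (M3) are the rank inequalities of a semimodular
lattice, and (M5) is (G2) applied to a basis of `y`. The flats are the pairs `({a ≤ x}, x)`, a
copy of `P`.

Conversely, in a simple matroid scheme `x ↦ ({atoms below x}, cl x)` identifies `S` with the same
construction applied to its poset of flats: atoms are flats, `cl x` is a minimal flat above the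
atoms of `x`, and `x` is determined by its atoms inside the Boolean interval below `cl x`. The rank
of a flat is its height in the poset of flats, because covering flats differ in rank by one. So an
isomorphism of the posets of flats induces an isomorphism of the schemes.
-/

section FinitePoset

variable {S : Type*} [PartialOrder S] [Finite S]

theorem exists_mem_mub_le {x y g : S} (hx : x ≤ g) (hy : y ≤ g) :
    ∃ u ∈ mub x y, u ≤ g := by
  obtain ⟨u, hug, hu⟩ :=
    exists_minimal_le_of_wellFoundedLT (fun v => x ≤ v ∧ y ≤ v) g ⟨hx, hy⟩
  exact ⟨u, ⟨hu.1.1, hu.1.2, fun v hxv hyv hvu => hu.eq_of_le ⟨hxv, hyv⟩ hvu⟩, hug⟩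

theorem exists_mem_mlb_ge {x y w : S} (hx : w ≤ x) (hy : w ≤ y) :
    ∃ l ∈ mlb x y, w ≤ l := by
  obtain ⟨l, hwl, hl⟩ := Finite.exists_le_maximal (p := fun v => v ≤ x ∧ v ≤ y) ⟨hx, hy⟩
  exact ⟨l, ⟨hl.1.1, hl.1.2, fun v hvx hvy hlv => hl.eq_of_ge ⟨hvx, hvy⟩ hlv⟩, hwl⟩

theorem exists_mem_mubSet_le {A : Set S} {g : S} (hg : ∀ a ∈ A, a ≤ g) :
    ∃ j ∈ mubSet A, j ≤ g := by
  obtain ⟨j, hjg, hj⟩ := exists_minimal_le_of_wellFoundedLT (fun v => ∀ a ∈ A, a ≤ v) g hg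
  exact ⟨j, ⟨hj.1, fun v hv hvj => hj.eq_of_le hv hvj⟩, hjg⟩

theorem exists_isMax_ge (x : S) : ∃ m, x ≤ m ∧ IsMax m := by
  obtain ⟨m, hxm, hm⟩ := Finite.exists_le_maximal (p := fun _ : S => True) trivial
  exact ⟨m, hxm, fun y hy => hm.2 trivial hy⟩

theorem strictMono_of_covBy_add_one {r : S → ℕ} (hmono : Monotone r)
    (hcov : ∀ x y, x ⋖ y → r y = r x + 1) : StrictMono r := by
  intro x y hxy
  obtain ⟨z, hxz, hzy⟩ := exists_covBy_le_of_lt hxy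
  have := hmono hzy
  have := hcov x z hxz
  omega

theorem eq_of_covBy_add_one {r r' : S → ℕ} (hr : ∀ x y, x ⋖ y → r y = r x + 1)
    (hr' : ∀ x y, x ⋖ y → r' y = r' x + 1) (hmin : ∀ x, IsMin x → r x = r' x) (x : S) :
    r x = r' x := by
  induction x using WellFoundedLT.induction with
  | _ x ih =>
    by_cases hx : IsMin x
    · exact hmin x hx
    · obtain ⟨y, hyx⟩ := exists_covBy_of_wellFoundedGT hx
      rw [hr y x hyx, hr' y x hyx, ih y hyx.lt]

end FinitePoset

theorem Set.Iic.coe_covBy_coe {P : Type*} [PartialOrder P] {m : P} {x y : Set.Iic m} :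
    (x : P) ⋖ y ↔ x ⋖ y :=
  Set.OrdConnected.apply_covBy_apply_iff (OrderEmbedding.subtype fun c => c ≤ m) <| by
    simpa only [OrderEmbedding.coe_subtype, Subtype.range_coe_subtype] using! Set.ordConnected_Iic

theorem Set.Iic.isAtom_iff {P : Type*} [PartialOrder P] [OrderBot P] {m : P} {x : Set.Iic m} :
    IsAtom x ↔ IsAtom (x : P) :=
  ⟨IsAtom.of_isAtom_coe_Iic, fun h => h.Iic x.2⟩

theorem OrderIso.isAtomistic {α β : Type*} [PartialOrder α] [OrderBot α] [PartialOrder β]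
    [OrderBot β] [IsAtomistic β] (e : α ≃o β) : IsAtomistic α := by
  refine ⟨fun b => ?_⟩
  obtain ⟨s, hs, hsa⟩ := isLUB_atoms (e b)
  refine ⟨e.symm '' s, by rwa [e.symm.isLUB_image, OrderIso.symm_symm], ?_⟩
  rintro _ ⟨a, ha, rfl⟩
  exact (e.symm.isAtom_iff a).2 (hsa a ha)

namespace IsSimplicialPoset

variable {T : Type*} [PartialOrder T] [OrderBot T] [Fintype T]

theorem isAtomistic_Iic (hS : IsSimplicialPoset T) (z : T) : IsAtomistic (Set.Iic z) :=
  (hS z).some.isAtomistic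

theorem le_of_forall_isAtom_le (hS : IsSimplicialPoset T) {x y z : T} (hx : x ≤ z)
    (hy : y ≤ z) (h : ∀ a, IsAtom a → a ≤ x → a ≤ y) : x ≤ y := by
  have := hS.isAtomistic_Iic z
  show (⟨x, hx⟩ : Set.Iic z) ≤ ⟨y, hy⟩
  exact le_iff_atom_le_imp.2 fun c hc hcx => h c (Set.Iic.isAtom_iff.1 hc) hcx

theorem exists_le_forall_isAtom_le_iff (hS : IsSimplicialPoset T) {z : T} {s : Set T}
    (hs : ∀ a ∈ s, IsAtom a ∧ a ≤ z) : ∃ x ≤ z, ∀ a, IsAtom a → (a ≤ x ↔ a ∈ s) := by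
  obtain ⟨e⟩ := hS z
  -- `x` is the join of `s` in the Boolean lattice `Set.Iic z`, where an atom below a join of
  -- atoms is one of them
  set s' : Set (Set.Iic z) := {b | (b : T) ∈ s}
  have hlub : IsLUB s' (e.symm (sSup (e '' s'))) := e.isLUB_image.1 (isLUB_sSup _)
  refine ⟨_, (e.symm (sSup (e '' s'))).2, fun a ha => ⟨fun hax => ?_, fun has =>
    hlub.1 (show (⟨a, (hs a has).2⟩ : Set.Iic z) ∈ s' from has)⟩⟩
  have haz : a ≤ z := hax.trans (e.symm _).2
  have hea : IsAtom (e ⟨a, haz⟩) := (e.isAtom_iff _).2 (ha.Iic haz)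
  obtain ⟨_, ⟨b, hb, rfl⟩, hab⟩ := hea.le_sSup.1 (e.le_symm_apply.1 hax)
  have hb' : IsAtom b := Set.Iic.isAtom_iff.2 (hs b hb).1
  have hab' : (⟨a, haz⟩ : Set.Iic z) = b :=
    (hb'.le_iff_eq (ha.Iic haz).1).1 (e.le_iff_le.1 hab)
  rw [← hab'] at hb
  exact hb

end IsSimplicialPoset

section NatRank

variable {T : Type*} [PartialOrder T] [OrderBot T]

theorem natRank_bot : natRank (⊥ : T) = 0 :=
  Nat.card_eq_zero.2 (.inl ⟨fun ⟨_, ha, hle⟩ => ha.1 (le_bot_iff.1 hle)⟩)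

theorem IsAtom.natRank_eq_one {a : T} (ha : IsAtom a) : natRank a = 1 :=
  Nat.card_eq_one_iff_exists.2
    ⟨⟨a, ha, le_rfl⟩, fun ⟨_, hb, hba⟩ => Subtype.ext ((ha.le_iff_eq hb.1).1 hba)⟩

theorem bot_mem_mlb_of_isAtom {x a : T} (ha : IsAtom a) (hax : ¬a ≤ x) : ⊥ ∈ mlb x a :=
  ⟨bot_le, bot_le, fun _ hmx hma _ => (ha.le_iff.1 hma).resolve_right fun h => hax (h ▸ hmx)⟩

end NatRank

namespace IsClosureFun

variable {T : Type*} [PartialOrder T] {ρ : T → ℕ} {cl : T → T}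

theorem le_cl (hcl : IsClosureFun ρ cl) (x : T) : x ≤ cl x := (hcl x).1

theorem rho_cl (hcl : IsClosureFun ρ cl) (x : T) : ρ (cl x) = ρ x := (hcl x).2.1

theorem le_cl_of_le_of_rho_eq (hcl : IsClosureFun ρ cl) {x y : T} (hxy : x ≤ y)
    (h : ρ y = ρ x) : y ≤ cl x :=
  (hcl x).2.2 y hxy h

theorem cl_cl (hcl : IsClosureFun ρ cl) (x : T) : cl (cl x) = cl x :=
  le_antisymm
    (hcl.le_cl_of_le_of_rho_eq ((hcl.le_cl x).trans (hcl.le_cl _)) (by rw [hcl.rho_cl, hcl.rho_cl]))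
    (hcl.le_cl _)

end IsClosureFun

abbrev Flats {T : Type*} (cl : T → T) : Type _ := {x : T // cl x = x}

namespace IsMatroidScheme

variable {T : Type*} [PartialOrder T] [OrderBot T] [Fintype T] {ρ : T → ℕ} {cl : T → T}

theorem rho_bot (hM : IsMatroidScheme ρ) : ρ ⊥ = 0 :=
  Nat.le_zero.1 (natRank_bot (T := T) ▸ hM.M1 ⊥)

theorem rho_eq_one_of_isAtom (hM : IsMatroidScheme ρ) {a : T} (ha : IsAtom a) (h0 : ρ a ≠ 0) :
    ρ a = 1 := by
  have := ha.natRank_eq_one ▸ hM.M1 a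
  omega

theorem cl_le_of_le (hM : IsMatroidScheme ρ) (hcl : IsClosureFun ρ cl) {x f : T} (hxf : x ≤ f)
    (hf : cl f = f) : cl x ≤ f := by
  obtain ⟨l, hl, hxl⟩ := exists_mem_mlb_ge (hcl.le_cl x) hxf
  have hρl : ρ (cl x) = ρ l := le_antisymm (hcl.rho_cl x ▸ hM.M2 hxl) (hM.M2 hl.1)
  -- (M4) and (M3) give a common upper bound of `cl x` and `f` of the same rank as `f`
  obtain ⟨u, hu⟩ := hM.M4 (cl x) f l hl hρl
  have hρu : ρ u = ρ f := le_antisymm (by have := hM.M3 _ _ u l hu hl; omega) (hM.M2 hu.2.1)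
  exact hu.1.trans (hf ▸ hcl.le_cl_of_le_of_rho_eq hu.2.1 hρu)

theorem cl_mono (hM : IsMatroidScheme ρ) (hcl : IsClosureFun ρ cl) : Monotone cl :=
  fun _ y h => hM.cl_le_of_le hcl (h.trans (hcl.le_cl y)) (hcl.cl_cl y)

theorem cl_bot (hM : IsMatroidScheme ρ) (hcl : IsClosureFun ρ cl)
    (hloop : ∀ a : T, IsAtom a → ρ a ≠ 0) : cl ⊥ = ⊥ := by
  obtain h | ⟨a, ha, hale⟩ := eq_bot_or_exists_atom_le (cl (⊥ : T))
  · exact h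
  · have := hM.M2 hale
    rw [hcl.rho_cl, hM.rho_bot] at this
    exact absurd (Nat.le_zero.1 this) (hloop a ha)

theorem eq_cl_of_forall_isAtom_le (hM : IsMatroidScheme ρ) (hcl : IsClosureFun ρ cl) {x g : T}
    (hg : cl g = g) (hgx : g ≤ cl x) (h : ∀ a, IsAtom a → a ≤ x → a ≤ g) : g = cl x := by
  have hρ : ρ x ≤ ρ g := by
    by_contra! hlt
    obtain ⟨a, ha, hax, hag, -⟩ := hM.M5 g x hlt
    exact hag (h a ha hax)
  refine le_antisymm hgx (hg ▸ hcl.le_cl_of_le_of_rho_eq hgx ?_)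
  have := hM.M2 hgx
  rw [hcl.rho_cl] at this ⊢
  omega

theorem rho_eq_add_one_of_covBy (hM : IsMatroidScheme ρ) (hcl : IsClosureFun ρ cl)
    (hloop : ∀ a : T, IsAtom a → ρ a ≠ 0) {f g : Flats cl} (hfg : f ⋖ g) :
    ρ g = ρ f + 1 := by
  have hlt : ρ f < ρ g := lt_of_le_of_ne (hM.M2 hfg.le) fun h =>
    hfg.lt.not_ge (show (g : T) ≤ f from f.2 ▸ hcl.le_cl_of_le_of_rho_eq hfg.le h.symm)
  obtain ⟨a, ha, hag, haf, -⟩ := hM.M5 f g hlt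
  obtain ⟨u, hu, hug⟩ := exists_mem_mub_le (show (f : T) ≤ g from hfg.le) hag
  have hρu : ρ u ≤ ρ f + 1 := by
    have := hM.M3 _ _ u ⊥ hu (bot_mem_mlb_of_isAtom ha haf)
    rw [hM.rho_bot, hM.rho_eq_one_of_isAtom ha (hloop a ha)] at this
    omega
  -- otherwise the flat `cl u` would lie strictly between `f` and `g`
  by_contra hne
  have hfu : f < ⟨cl u, hcl.cl_cl u⟩ := lt_of_le_of_ne (hu.1.trans (hcl.le_cl u)) fun h =>
    haf (hu.2.1.trans ((hcl.le_cl u).trans (congrArg Subtype.val h).ge))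
  have hug' : (⟨cl u, hcl.cl_cl u⟩ : Flats cl) < g :=
    lt_of_le_of_ne (hM.cl_le_of_le hcl hug g.2) fun h => by
      have := hcl.rho_cl u
      rw [show cl u = g from congrArg Subtype.val h] at this
      omega
  exact hfg.2 hfu hug'

theorem coe_eq_bot_of_isMin (hM : IsMatroidScheme ρ) (hcl : IsClosureFun ρ cl)
    (hloop : ∀ a : T, IsAtom a → ρ a ≠ 0) {f : Flats cl} (hf : IsMin f) :
    (f : T) = ⊥ :=
  le_bot_iff.1 (hf (show (⟨⊥, hM.cl_bot hcl hloop⟩ : Flats cl) ≤ f from bot_le))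

theorem isAtom_coe_iff (hM : IsMatroidScheme ρ) (hcl : IsClosureFun ρ cl)
    (hs : ∀ a : T, IsAtom a → cl a = a ∧ ρ a ≠ 0) [OrderBot (Flats cl)]
    {f : Flats cl} : IsAtom (f : T) ↔ IsAtom f := by
  have hbot := hM.coe_eq_bot_of_isMin hcl (fun a ha => (hs a ha).2) isMin_bot
  refine ⟨fun ha => ⟨fun h => ha.1 (h ▸ hbot), fun g hgf => Subtype.ext ?_⟩, fun hf => ?_⟩
  · rw [hbot]
    exact ha.2 g hgf
  · obtain h | ⟨a, ha, haf⟩ := eq_bot_or_exists_atom_le (f : T)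
    · exact absurd (Subtype.ext (h.trans hbot.symm)) hf.1
    · have := (hf.le_iff.1 (show ⟨a, (hs a ha).1⟩ ≤ f from haf)).resolve_left fun h =>
        ha.1 ((congrArg Subtype.val h).trans hbot)
      exact this ▸ ha

end IsMatroidScheme

theorem OrderIso.apply_mem_mubSet {P Q : Type*} [PartialOrder P] [PartialOrder Q] (e : P ≃o Q)
    {A : Set P} {x : P} (hx : x ∈ mubSet A) : e x ∈ mubSet (e '' A) := by
  refine ⟨Set.forall_mem_image.2 fun a ha => e.monotone (hx.1 a ha), fun v hv hvx => ?_⟩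
  have := hx.2 (e.symm v) (fun a ha => e.le_symm_apply.2 (hv _ ⟨a, ha, rfl⟩))
    (e.symm_apply_le.2 hvx)
  rw [← this, e.apply_symm_apply]

@[ext]
structure AtomJoin (P : Type*) [PartialOrder P] [OrderBot P] where
  atoms : Set P
  join : P
  isAtom_of_mem : ∀ a ∈ atoms, IsAtom a
  join_mem_mubSet : join ∈ mubSet atoms

namespace AtomJoin

variable {P Q : Type*} [PartialOrder P] [OrderBot P] [PartialOrder Q] [OrderBot Q]

theorem toProd_injective : Function.Injective fun q : AtomJoin P => (q.atoms, q.join) :=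
  fun _ _ h => AtomJoin.ext (congrArg Prod.fst h) (congrArg Prod.snd h)

instance : PartialOrder (AtomJoin P) := PartialOrder.lift _ toProd_injective

instance : OrderBot (AtomJoin P) where
  bot := ⟨∅, ⊥, by simp, by simp [mubSet]⟩
  bot_le q := ⟨Set.empty_subset _, bot_le⟩

noncomputable instance [Finite P] : Fintype (AtomJoin P) :=
  have := Finite.of_injective _ (toProd_injective (P := P))
  Fintype.ofFinite _

theorem le_join (q : AtomJoin P) {a : P} (ha : a ∈ q.atoms) : a ≤ q.join :=
  q.join_mem_mubSet.1 a ha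

theorem eq_bot_of_atoms_eq_empty {q : AtomJoin P} (h : q.atoms = ∅) : q = ⊥ :=
  AtomJoin.ext h (q.join_mem_mubSet.2 ⊥ (by simp [h]) bot_le).symm

def single (a : P) (ha : IsAtom a) : AtomJoin P :=
  ⟨{a}, a, by simpa using ha, ⟨by simp, fun _ hv hva => le_antisymm hva (hv a rfl)⟩⟩

theorem single_le_iff {a : P} (ha : IsAtom a) {q : AtomJoin P} :
    single a ha ≤ q ↔ a ∈ q.atoms :=
  ⟨fun h => h.1 rfl, fun h => ⟨Set.singleton_subset_iff.2 h, q.le_join h⟩⟩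

theorem isAtom_single {a : P} (ha : IsAtom a) : IsAtom (single a ha) := by
  refine ⟨fun h => ha.1 (congrArg AtomJoin.join h), fun t ht => eq_bot_of_atoms_eq_empty ?_⟩
  refine Set.eq_empty_of_forall_notMem fun b hb => ?_
  obtain rfl : b = a := ht.le.1 hb
  exact ht.not_ge ((single_le_iff ha).2 hb)

theorem isAtom_iff {q : AtomJoin P} : IsAtom q ↔ ∃ a ha, q = single a ha := by
  refine ⟨fun hq => ?_, fun ⟨a, ha, h⟩ => h ▸ isAtom_single ha⟩
  obtain ⟨a, haq⟩ := Set.nonempty_iff_ne_empty.2 fun h => hq.1 (eq_bot_of_atoms_eq_empty h)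
  have ha := q.isAtom_of_mem a haq
  refine ⟨a, ha, ((hq.le_iff.1 ((single_le_iff ha).2 haq)).resolve_left (isAtom_single ha).1).symm⟩

noncomputable def atomsEquiv (q : AtomJoin P) : q.atoms ≃ {s : AtomJoin P // IsAtom s ∧ s ≤ q} :=
  Equiv.ofBijective
    (fun a => ⟨single a (q.isAtom_of_mem a a.2), isAtom_single _, (single_le_iff _).2 a.2⟩)
    ⟨fun a b h => Subtype.ext (congrArg (fun s => AtomJoin.join (Subtype.val s)) h),
      fun ⟨s, hs, hsq⟩ => by
        obtain ⟨a, ha, rfl⟩ := isAtom_iff.1 hs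
        exact ⟨⟨a, (single_le_iff ha).1 hsq⟩, rfl⟩⟩

theorem natRank_eq (q : AtomJoin P) : natRank q = Nat.card q.atoms :=
  Nat.card_congr q.atomsEquiv.symm

def map (e : P ≃o Q) (q : AtomJoin P) : AtomJoin Q where
  atoms := e '' q.atoms
  join := e q.join
  isAtom_of_mem := Set.forall_mem_image.2 fun a ha => (e.isAtom_iff a).2 (q.isAtom_of_mem a ha)
  join_mem_mubSet := e.apply_mem_mubSet q.join_mem_mubSet

def congr (e : P ≃o Q) : AtomJoin P ≃o AtomJoin Q where
  toFun := map e
  invFun := map e.symm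
  left_inv q := AtomJoin.ext (e.symm_image_image q.atoms) (e.symm_apply_apply q.join)
  right_inv q := AtomJoin.ext (e.image_symm_image q.atoms) (e.apply_symm_apply q.join)
  map_rel_iff' := and_congr (Set.image_subset_image_iff e.injective) e.le_iff_le

end AtomJoin

namespace IsMatroidScheme

variable {T T' : Type*} [PartialOrder T] [OrderBot T] [Fintype T] [PartialOrder T'] [OrderBot T']
  [Fintype T'] {ρ : T → ℕ} {cl : T → T} {ρ' : T' → ℕ} {cl' : T' → T'}

theorem rho_apply_orderIso_flats (hM : IsMatroidScheme ρ) (hcl : IsClosureFun ρ cl)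
    (hloop : ∀ a : T, IsAtom a → ρ a ≠ 0) (hM' : IsMatroidScheme ρ') (hcl' : IsClosureFun ρ' cl')
    (hloop' : ∀ a : T', IsAtom a → ρ' a ≠ 0)
    (e : Flats cl ≃o Flats cl') (f : Flats cl) :
    ρ' (e f) = ρ f := by
  refine (eq_of_covBy_add_one (r := fun f => ρ f.val) (r' := fun f => ρ' (e f).val)
    (fun _ _ h => hM.rho_eq_add_one_of_covBy hcl hloop h)
    (fun _ _ h => hM'.rho_eq_add_one_of_covBy hcl' hloop' ((apply_covBy_apply_iff e).2 h))
    (fun _ hf => ?_) f).symm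
  simp only [hM.coe_eq_bot_of_isMin hcl hloop hf,
    hM'.coe_eq_bot_of_isMin hcl' hloop' (e.isMin_apply.2 hf), hM.rho_bot, hM'.rho_bot]

variable [OrderBot (Flats cl)]

theorem cl_mem_mubSet (hM : IsMatroidScheme ρ) (hcl : IsClosureFun ρ cl)
    (hs : ∀ a : T, IsAtom a → cl a = a ∧ ρ a ≠ 0) (x : T) :
    (⟨cl x, hcl.cl_cl x⟩ : Flats cl) ∈ mubSet {f : Flats cl | IsAtom f ∧ (f : T) ≤ x} :=
  ⟨fun _ hf => hf.2.trans (hcl.le_cl x), fun g hg hgx => Subtype.ext <|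
    hM.eq_cl_of_forall_isAtom_le hcl g.2 hgx fun a ha hax =>
      hg ⟨a, (hs a ha).1⟩ ⟨(hM.isAtom_coe_iff hcl hs).1 ha, hax⟩⟩

def toAtomJoinFlats (hM : IsMatroidScheme ρ) (hcl : IsClosureFun ρ cl)
    (hs : ∀ a : T, IsAtom a → cl a = a ∧ ρ a ≠ 0) (x : T) : AtomJoin (Flats cl) :=
  ⟨{f | IsAtom f ∧ (f : T) ≤ x}, ⟨cl x, hcl.cl_cl x⟩, fun _ hf => hf.1, hM.cl_mem_mubSet hcl hs x⟩

theorem toAtomJoinFlats_le_iff (hM : IsMatroidScheme ρ) (hcl : IsClosureFun ρ cl)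
    (hs : ∀ a : T, IsAtom a → cl a = a ∧ ρ a ≠ 0) (x y : T) :
    hM.toAtomJoinFlats hcl hs x ≤ hM.toAtomJoinFlats hcl hs y ↔ x ≤ y := by
  refine ⟨fun h => ?_, fun hxy => ⟨fun f hf => ⟨hf.1, hf.2.trans hxy⟩, hM.cl_mono hcl hxy⟩⟩
  refine hM.simplicial.le_of_forall_isAtom_le ((hcl.le_cl x).trans h.2) (hcl.le_cl y)
    fun a ha hax => ?_
  exact (h.1 (show ⟨a, (hs a ha).1⟩ ∈ {f : Flats cl | IsAtom f ∧ (f : T) ≤ x} from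
    ⟨(hM.isAtom_coe_iff hcl hs).1 ha, hax⟩)).2

theorem toAtomJoinFlats_surjective (hM : IsMatroidScheme ρ) (hcl : IsClosureFun ρ cl)
    (hs : ∀ a : T, IsAtom a → cl a = a ∧ ρ a ≠ 0) :
    Function.Surjective (hM.toAtomJoinFlats hcl hs) := by
  intro q
  obtain ⟨x, hxq, hx⟩ := hM.simplicial.exists_le_forall_isAtom_le_iff
    (s := Subtype.val '' q.atoms) (z := q.join) <| Set.forall_mem_image.2 fun f hf =>
      ⟨(hM.isAtom_coe_iff hcl hs).2 (q.isAtom_of_mem f hf), q.le_join hf⟩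
  have hatoms : ∀ f : Flats cl, IsAtom f ∧ (f : T) ≤ x ↔ f ∈ q.atoms := fun f => by
    rw [← hM.isAtom_coe_iff hcl hs]
    refine ⟨fun h => Subtype.val_injective.mem_set_image.1 ((hx f h.1).1 h.2), fun h => ?_⟩
    have hf := (hM.isAtom_coe_iff hcl hs).2 (q.isAtom_of_mem f h)
    exact ⟨hf, (hx f hf).2 ⟨f, h, rfl⟩⟩
  refine ⟨x, AtomJoin.ext (Set.ext hatoms) (q.join_mem_mubSet.2 _ (fun f hf => ?_)
    (hM.cl_le_of_le hcl hxq q.join.2))⟩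
  exact ((hatoms f).2 hf).2.trans (hcl.le_cl x)

noncomputable def orderIsoAtomJoinFlats (hM : IsMatroidScheme ρ) (hcl : IsClosureFun ρ cl)
    (hs : ∀ a : T, IsAtom a → cl a = a ∧ ρ a ≠ 0) : T ≃o AtomJoin (Flats cl) :=
  .ofSurjective (.ofMapLEIff _ (hM.toAtomJoinFlats_le_iff hcl hs))
    (hM.toAtomJoinFlats_surjective hcl hs)

theorem coe_orderIsoAtomJoinFlats_join (hM : IsMatroidScheme ρ) (hcl : IsClosureFun ρ cl)
    (hs : ∀ a : T, IsAtom a → cl a = a ∧ ρ a ≠ 0) (x : T) :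
    ((hM.orderIsoAtomJoinFlats hcl hs x).join : T) = cl x :=
  rfl

end IsMatroidScheme

theorem IsMatroidScheme.exists_orderIso_of_orderIso_flats {T T' : Type*} [PartialOrder T]
    [OrderBot T] [Fintype T] [PartialOrder T'] [OrderBot T'] [Fintype T'] {ρ : T → ℕ}
    {cl : T → T} {ρ' : T' → ℕ} {cl' : T' → T'} (hM : IsMatroidScheme ρ) (hcl : IsClosureFun ρ cl)
    (hs : ∀ a : T, IsAtom a → cl a = a ∧ ρ a ≠ 0) (hM' : IsMatroidScheme ρ')
    (hcl' : IsClosureFun ρ' cl') (hs' : ∀ a : T', IsAtom a → cl' a = a ∧ ρ' a ≠ 0)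
    (e : Flats cl ≃o Flats cl') :
    ∃ ψ : T ≃o T', ∀ x : T, ρ x = ρ' (ψ x) := by
  let _ : OrderBot (Flats cl) := Subtype.orderBot (hM.cl_bot hcl fun a ha => (hs a ha).2)
  let _ : OrderBot (Flats cl') := Subtype.orderBot (hM'.cl_bot hcl' fun a ha => (hs' a ha).2)
  set Φ := hM.orderIsoAtomJoinFlats hcl hs
  set Φ' := hM'.orderIsoAtomJoinFlats hcl' hs'
  refine ⟨Φ.trans ((AtomJoin.congr e).trans Φ'.symm), fun x => ?_⟩
  have hcl'ψ : cl' (Φ'.symm (AtomJoin.congr e (Φ x))) = e ⟨cl x, hcl.cl_cl x⟩ := by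
    rw [← hM'.coe_orderIsoAtomJoinFlats_join hcl' hs', Φ'.apply_symm_apply]
    rfl
  calc ρ x = ρ (cl x) := (hcl.rho_cl x).symm
    _ = ρ' (e ⟨cl x, hcl.cl_cl x⟩) := (hM.rho_apply_orderIso_flats hcl (fun a ha => (hs a ha).2)
        hM' hcl' (fun a ha => (hs' a ha).2) e ⟨cl x, hcl.cl_cl x⟩).symm
    _ = ρ' (Φ'.symm (AtomJoin.congr e (Φ x))) := by rw [← hcl'ψ, hcl'.rho_cl]

section SemimodularLattice

variable {L : Type*} [Lattice L] [OrderBot L] [IsUpperModularLattice L] {rk : L → ℕ}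

theorem IsAtom.covBy_sup_of_not_le {a x : L} (ha : IsAtom a) (hax : ¬a ≤ x) : x ⋖ x ⊔ a := by
  refine covBy_sup_of_inf_covBy_right ?_
  rw [(ha.le_iff.1 inf_le_right).resolve_right fun h => hax (h ▸ inf_le_left)]
  exact ha.bot_covBy

theorem rk_sup_le_add_one (hcov : ∀ x y : L, x ⋖ y → rk y = rk x + 1) (x : L) {a : L}
    (ha : IsAtom a) : rk (x ⊔ a) ≤ rk x + 1 := by
  by_cases hax : a ≤ x
  · rw [sup_eq_left.2 hax]
    omega
  · exact (hcov _ _ (ha.covBy_sup_of_not_le hax)).le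

theorem rk_sup_add_rk_inf_le [Finite L] [IsAtomistic L]
    (hcov : ∀ x y : L, x ⋖ y → rk y = rk x + 1) (x y : L) :
    rk (x ⊔ y) + rk (x ⊓ y) ≤ rk x + rk y := by
  suffices h : ∀ z ≤ y, rk (x ⊔ y) + rk z ≤ rk (x ⊔ z) + rk y by
    simpa [sup_inf_self] using h (x ⊓ y) inf_le_right
  intro z
  induction z using WellFoundedGT.induction with
  | _ z ih =>
    intro hzy
    obtain rfl | hzy := hzy.eq_or_lt
    · rfl
    obtain ⟨a, ha, hay, haz⟩ : ∃ a, IsAtom a ∧ a ≤ y ∧ ¬a ≤ z := by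
      by_contra! h
      exact hzy.not_ge (le_iff_atom_le_imp.2 h)
    have hza := ha.covBy_sup_of_not_le haz
    have := ih _ hza.lt (sup_le hzy.le hay)
    have := hcov _ _ hza
    have := rk_sup_le_add_one hcov (x ⊔ z) ha
    rw [sup_assoc] at this
    omega

theorem exists_subset_sup_eq_card_eq_rk [Finite L] (hcov : ∀ x y : L, x ⋖ y → rk y = rk x + 1)
    (hbot : rk ⊥ = 0) (s : Finset L) (hs : ∀ a ∈ s, IsAtom a) :
    ∃ t ⊆ s, t.sup id = s.sup id ∧ t.card = rk (s.sup id) := by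
  classical
  obtain ⟨t, -, ht⟩ := Finite.exists_le_maximal
    (p := fun t : Finset L => t ⊆ s ∧ t.card = rk (t.sup id)) (a := ∅)
    ⟨Finset.empty_subset _, by simp [hbot]⟩
  -- an atom of `s` outside the span of `t` could be added to `t`
  have hsup : t.sup id = s.sup id := by
    refine le_antisymm (Finset.sup_mono ht.1.1) (Finset.sup_le fun a has => ?_)
    by_contra hat
    have hnot : a ∉ t := fun h => hat (Finset.le_sup (f := id) h)
    have hins : insert a t ⊆ s ∧ (insert a t).card = rk ((insert a t).sup id) := by
      refine ⟨Finset.insert_subset has ht.1.1, ?_⟩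
      rw [Finset.card_insert_of_notMem hnot, Finset.sup_insert, id, sup_comm,
        hcov _ _ ((hs a has).covBy_sup_of_not_le hat), ht.1.2]
    exact hnot (ht.2 hins (Finset.subset_insert a t) (Finset.mem_insert_self a t))
  exact ⟨t, ht.1.1, hsup, hsup ▸ ht.1.2⟩

end SemimodularLattice

theorem ordAtom_iff_isAtom {L : Type*} [PartialOrder L] [OrderBot L] {a : L} :
    OrdAtom a ↔ IsAtom a :=
  ⟨fun ⟨_, hb, hba⟩ => bot_covBy_iff.1 (le_bot_iff.1 (hb ⊥) ▸ hba),
    fun ha => ⟨⊥, fun _ => bot_le, ha.bot_covBy⟩⟩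

namespace IsGeomLatOrder

variable {L : Type*} [PartialOrder L]

noncomputable abbrev toLattice (h : IsGeomLatOrder L) : Lattice L where
  sup x y := (h.2.1 x y).choose
  le_sup_left x y := (h.2.1 x y).choose_spec.1 (by simp)
  le_sup_right x y := (h.2.1 x y).choose_spec.1 (by simp)
  sup_le x y _ hxz hyz := (h.2.1 x y).choose_spec.2 (by simp [upperBounds, hxz, hyz])
  inf x y := (h.2.2.1 x y).choose
  inf_le_left x y := (h.2.2.1 x y).choose_spec.1 (by simp)
  inf_le_right x y := (h.2.2.1 x y).choose_spec.1 (by simp)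
  le_inf _ y z hxy hxz := (h.2.2.1 y z).choose_spec.2 (by simp [lowerBounds, hxy, hxz])

theorem isUpperModularLattice (h : IsGeomLatOrder L) :
    letI := h.toLattice
    IsUpperModularLattice L :=
  letI := h.toLattice
  ⟨fun hab => h.2.2.2.2 _ _ _ _ isGLB_pair isLUB_pair hab⟩

theorem isAtomistic [OrderBot L] (h : IsGeomLatOrder L) : IsAtomistic L :=
  ⟨fun x => ⟨{a | IsAtom a ∧ a ≤ x}, by simpa only [ordAtom_iff_isAtom] using h.2.2.2.1 x,
    fun _ ha => ha.1⟩⟩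

end IsGeomLatOrder

namespace IsGeometricPoset

variable {P : Type*} [PartialOrder P] [OrderBot P] [Fintype P] {rk : P → ℕ}

theorem rk_bot (hG : IsGeometricPoset P rk) : rk ⊥ = 0 := hG.1

theorem monotone (hG : IsGeometricPoset P rk) : Monotone rk := hG.2.1

theorem rk_covBy (hG : IsGeometricPoset P rk) {x y : P} (h : x ⋖ y) : rk y = rk x + 1 :=
  hG.2.2.1 x y h

theorem isGeomLatOrder_Iic (hG : IsGeometricPoset P rk) {m : P} (hm : IsMax m) :
    IsGeomLatOrder (Set.Iic m) :=
  hG.2.2.2.1 m hm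

theorem exists_mem_not_le (hG : IsGeometricPoset P rk) (x : P) {A : Set P}
    (hA : ∀ a ∈ A, IsAtom a) {y : P} (hy : y ∈ mubSet A) (hxy : rk x < rk y)
    (hcard : rk y = Nat.card A) : ∃ a ∈ A, ¬a ≤ x ∧ ∃ w, x ≤ w ∧ a ≤ w :=
  hG.2.2.2.2 x A hA y hy hxy hcard

theorem eq_of_le_of_rk_le (hG : IsGeometricPoset P rk) {x y : P} (hxy : x ≤ y)
    (h : rk y ≤ rk x) : x = y :=
  hxy.eq_of_not_lt fun hlt =>
    (strictMono_of_covBy_add_one hG.monotone (fun _ _ => hG.rk_covBy) hlt).not_ge h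

theorem rk_eq_one_of_isAtom (hG : IsGeometricPoset P rk) {a : P} (ha : IsAtom a) : rk a = 1 := by
  rw [hG.rk_covBy ha.bot_covBy, hG.rk_bot]

theorem mem_mubSet_atoms_le (hG : IsGeometricPoset P rk) (x : P) :
    x ∈ mubSet {a | IsAtom a ∧ a ≤ x} := by
  obtain ⟨m, hxm, hm⟩ := exists_isMax_ge x
  have := (hG.isGeomLatOrder_Iic hm).isAtomistic
  refine ⟨fun a ha => ha.2, fun v hv hvx => le_antisymm hvx ?_⟩
  have hub : (⟨v, hvx.trans hxm⟩ : Set.Iic m) ∈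
      upperBounds {a | IsAtom a ∧ a ≤ (⟨x, hxm⟩ : Set.Iic m)} :=
    fun a ha => hv a ⟨Set.Iic.isAtom_iff.1 ha.1, ha.2⟩
  exact (isLUB_atoms_le (⟨x, hxm⟩ : Set.Iic m)).2 hub

theorem le_of_mem_mubSet (hG : IsGeometricPoset P rk) {A : Set P} {j v g : P}
    (hj : j ∈ mubSet A) (hv : ∀ a ∈ A, a ≤ v) (hjg : j ≤ g) (hvg : v ≤ g) : j ≤ v := by
  obtain ⟨m, hgm, hm⟩ := exists_isMax_ge g
  obtain ⟨l, hl⟩ := (hG.isGeomLatOrder_Iic hm).2.2.1 ⟨j, hjg.trans hgm⟩ ⟨v, hvg.trans hgm⟩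
  -- the meet of `j` and `v` below `m` is again an upper bound of `A`
  have hlA : ∀ a ∈ A, a ≤ l := fun a ha => by
    refine hl.2 (show (⟨a, (hj.1 a ha).trans (hjg.trans hgm)⟩ : Set.Iic m) ∈ lowerBounds _ from ?_)
    rintro _ (rfl | rfl)
    exacts [hj.1 a ha, hv a ha]
  have hlj : (l : P) = j := hj.2 l hlA (hl.1 (Set.mem_insert _ _))
  exact hlj ▸ hl.1 (Set.mem_insert_of_mem _ rfl)

theorem mem_mubSet_union (hG : IsGeometricPoset P rk) {A B : Set P} {x y z : P}
    (hx : x ∈ mubSet A) (hy : y ∈ mubSet B) (hz : z ∈ mub x y) : z ∈ mubSet (A ∪ B) := by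
  refine ⟨fun a ha => ha.elim (fun h => (hx.1 a h).trans hz.1) fun h => (hy.1 a h).trans hz.2.1,
    fun v hv hvz => hz.2.2 v ?_ ?_ hvz⟩
  · exact hG.le_of_mem_mubSet hx (fun a ha => hv a (.inl ha)) hz.1 hvz
  · exact hG.le_of_mem_mubSet hy (fun a ha => hv a (.inr ha)) hz.2.1 hvz

theorem rk_add_rk_le_of_mem_mub (hG : IsGeometricPoset P rk) {x y z w : P} (hz : z ∈ mub x y)
    (hwx : w ≤ x) (hwy : w ≤ y) : rk z + rk w ≤ rk x + rk y := by
  obtain ⟨m, hzm, hm⟩ := exists_isMax_ge z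
  have hL := hG.isGeomLatOrder_Iic hm
  let _ := hL.toLattice
  have := hL.isUpperModularLattice
  have := hL.isAtomistic
  let x' : Set.Iic m := ⟨x, hz.1.trans hzm⟩
  let y' : Set.Iic m := ⟨y, hz.2.1.trans hzm⟩
  have hzxy : ((x' ⊔ y' : Set.Iic m) : P) = z :=
    hz.2.2 _ (le_sup_left : x' ≤ x' ⊔ y') (le_sup_right : y' ≤ x' ⊔ y')
      (sup_le (show x' ≤ ⟨z, hzm⟩ from hz.1) (show y' ≤ ⟨z, hzm⟩ from hz.2.1))
  have hw : rk w ≤ rk (x' ⊓ y' : Set.Iic m) :=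
    hG.monotone (show (⟨w, hwx.trans x'.2⟩ : Set.Iic m) ≤ x' ⊓ y' from le_inf hwx hwy)
  have : rk (x' ⊔ y' : Set.Iic m) + rk (x' ⊓ y' : Set.Iic m) ≤ rk x + rk y :=
    rk_sup_add_rk_inf_le (rk := fun k : Set.Iic m => rk k)
      (fun _ _ h => hG.rk_covBy (Set.Iic.coe_covBy_coe.2 h)) x' y'
  rw [← hzxy]
  omega

theorem exists_subset_mem_mubSet_card_eq (hG : IsGeometricPoset P rk) {A : Set P} {j : P}
    (hA : ∀ a ∈ A, IsAtom a) (hj : j ∈ mubSet A) : ∃ B ⊆ A, j ∈ mubSet B ∧ Nat.card B = rk j := by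
  classical
  obtain ⟨m, hjm, hm⟩ := exists_isMax_ge j
  have hL := hG.isGeomLatOrder_Iic hm
  let _ := hL.toLattice
  have := hL.isUpperModularLattice
  let s : Finset (Set.Iic m) := Finset.univ.filter fun k => (k : P) ∈ A
  have hs : ∀ k, k ∈ s ↔ (k : P) ∈ A := by simp [s]
  have hsup : ((s.sup id : Set.Iic m) : P) = j := hj.2 _
    (fun a ha => Finset.le_sup (f := id) ((hs ⟨a, (hj.1 a ha).trans hjm⟩).2 ha))
    (show s.sup id ≤ ⟨j, hjm⟩ from Finset.sup_le fun k hk => hj.1 k ((hs k).1 hk))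
  obtain ⟨t, hts, htsup, htcard⟩ :=
    exists_subset_sup_eq_card_eq_rk (rk := fun k : Set.Iic m => rk k)
      (fun _ _ h => hG.rk_covBy (Set.Iic.coe_covBy_coe.2 h)) hG.rk_bot s
      fun k hk => Set.Iic.isAtom_iff.2 (hA k ((hs k).1 hk))
  rw [← htsup] at hsup
  refine ⟨Subtype.val '' (t : Set (Set.Iic m)), ?_, ⟨?_, fun v hv hvj => ?_⟩, ?_⟩
  · rintro _ ⟨k, hk, rfl⟩
    exact (hs k).1 (hts hk)
  · rintro _ ⟨k, hk, rfl⟩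
    exact hsup ▸ Finset.le_sup (f := id) hk
  · refine le_antisymm hvj (hsup ▸ ?_)
    exact show t.sup id ≤ ⟨v, hvj.trans hjm⟩ from Finset.sup_le fun k hk => hv k ⟨k, hk, rfl⟩
  · rw [Nat.card_image_of_injective Subtype.val_injective, Nat.card_coe_set_eq,
      Set.ncard_coe_finset, htcard, ← htsup, hsup]

theorem rk_le_card_of_mem_mubSet (hG : IsGeometricPoset P rk) {A : Set P} {j : P}
    (hA : ∀ a ∈ A, IsAtom a) (hj : j ∈ mubSet A) : rk j ≤ Nat.card A := by
  obtain ⟨B, hBA, -, hB⟩ := hG.exists_subset_mem_mubSet_card_eq hA hj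
  exact hB ▸ Nat.card_mono A.toFinite hBA

def toAtomJoin (hG : IsGeometricPoset P rk) (x : P) : AtomJoin P :=
  ⟨{a | IsAtom a ∧ a ≤ x}, x, fun _ ha => ha.1, hG.mem_mubSet_atoms_le x⟩

theorem isSimplicialPoset_atomJoin (hG : IsGeometricPoset P rk) :
    IsSimplicialPoset (AtomJoin P) := by
  intro t
  let toSet (r : Set.Iic t) : Set t.atoms := {a | (a : P) ∈ r.1.atoms}
  have hle (r r' : Set.Iic t) : toSet r ≤ toSet r' ↔ r ≤ r' := by
    refine ⟨fun h => ⟨fun b hb => h (a := ⟨b, r.2.1 hb⟩) hb, ?_⟩, fun h _ ha => h.1 ha⟩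
    exact hG.le_of_mem_mubSet r.1.join_mem_mubSet
      (fun b hb => r'.1.le_join (h (a := ⟨b, r.2.1 hb⟩) hb)) r.2.2 r'.2.2
  have hsurj : Function.Surjective toSet := fun D => by
    obtain ⟨j, hj, hjt⟩ := exists_mem_mubSet_le (A := Subtype.val '' D) fun _ ⟨a, _, ha⟩ =>
      ha ▸ t.le_join a.2
    refine ⟨⟨⟨Subtype.val '' D, j, fun _ ⟨a, _, ha⟩ => ha ▸ t.isAtom_of_mem a a.2, hj⟩,
      fun _ ⟨a, _, ha⟩ => ha ▸ a.2, hjt⟩, Set.ext fun a => ?_⟩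
    exact Subtype.val_injective.mem_set_image
  exact ⟨(OrderIso.ofSurjective (.ofMapLEIff toSet hle) hsurj).trans
    (Equiv.toOrderIsoSet t.atomsEquiv)⟩

def joinOfMemMub (hG : IsGeometricPoset P rk) {x y : AtomJoin P} {z : P}
    (hz : z ∈ mub x.join y.join) : AtomJoin P :=
  ⟨x.atoms ∪ y.atoms, z, fun a ha => ha.elim (x.isAtom_of_mem a) (y.isAtom_of_mem a),
    hG.mem_mubSet_union x.join_mem_mubSet y.join_mem_mubSet hz⟩

theorem le_joinOfMemMub_left (hG : IsGeometricPoset P rk) {x y : AtomJoin P} {z : P}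
    (hz : z ∈ mub x.join y.join) : x ≤ hG.joinOfMemMub hz :=
  ⟨Set.subset_union_left, hz.1⟩

theorem le_joinOfMemMub_right (hG : IsGeometricPoset P rk) {x y : AtomJoin P} {z : P}
    (hz : z ∈ mub x.join y.join) : y ≤ hG.joinOfMemMub hz :=
  ⟨Set.subset_union_right, hz.2.1⟩

theorem mub_nonempty_of_mem_mub_join (hG : IsGeometricPoset P rk) {x y : AtomJoin P} {z : P}
    (hz : z ∈ mub x.join y.join) : (mub x y).Nonempty :=
  let ⟨u, hu, _⟩ := exists_mem_mub_le (hG.le_joinOfMemMub_left hz) (hG.le_joinOfMemMub_right hz)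
  ⟨u, hu⟩

theorem rk_join_add_rk_join_le (hG : IsGeometricPoset P rk) {x y u l : AtomJoin P}
    (hu : u ∈ mub x y) (hl : l ∈ mlb x y) : rk u.join + rk l.join ≤ rk x.join + rk y.join := by
  obtain ⟨z, hz, hzu⟩ := exists_mem_mub_le hu.1.2 hu.2.1.2
  have hqu : hG.joinOfMemMub hz = u := hu.2.2 _ (hG.le_joinOfMemMub_left hz)
    (hG.le_joinOfMemMub_right hz) ⟨Set.union_subset hu.1.1 hu.2.1.1, hzu⟩
  rw [← hqu]
  exact hG.rk_add_rk_le_of_mem_mub hz hl.1.2 hl.2.1.2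

theorem mub_nonempty_of_rk_join_eq (hG : IsGeometricPoset P rk) {x y l : AtomJoin P}
    (hl : l ∈ mlb x y) (hrk : rk x.join = rk l.join) : (mub x y).Nonempty := by
  have hlx : l.join = x.join := hG.eq_of_le_of_rk_le hl.1.2 hrk.le
  have hxy : x.join ≤ y.join := hlx ▸ hl.2.1.2
  exact hG.mub_nonempty_of_mem_mub_join ⟨hxy, le_rfl, fun _ _ hyv hvy => le_antisymm hvy hyv⟩

theorem exists_isAtom_le_not_le_mub_nonempty (hG : IsGeometricPoset P rk) {x y : AtomJoin P}
    (hrk : rk x.join < rk y.join) : ∃ a, IsAtom a ∧ a ≤ y ∧ ¬a ≤ x ∧ (mub x a).Nonempty := by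
  obtain ⟨B, hBy, hB, hcard⟩ :=
    hG.exists_subset_mem_mubSet_card_eq y.isAtom_of_mem y.join_mem_mubSet
  obtain ⟨a, haB, hax, w, hxw, haw⟩ := hG.exists_mem_not_le x.join
    (fun a ha => y.isAtom_of_mem a (hBy ha)) hB hrk hcard.symm
  have ha := y.isAtom_of_mem a (hBy haB)
  obtain ⟨z, hz, -⟩ := exists_mem_mub_le hxw haw
  exact ⟨.single a ha, AtomJoin.isAtom_single ha, (AtomJoin.single_le_iff ha).2 (hBy haB),
    fun h => hax (x.le_join ((AtomJoin.single_le_iff ha).1 h)),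
    hG.mub_nonempty_of_mem_mub_join (y := .single a ha) hz⟩

theorem isMatroidScheme_atomJoin (hG : IsGeometricPoset P rk) :
    IsMatroidScheme fun q : AtomJoin P => rk q.join where
  simplicial := hG.isSimplicialPoset_atomJoin
  M1 q := q.natRank_eq ▸ hG.rk_le_card_of_mem_mubSet q.isAtom_of_mem q.join_mem_mubSet
  M2 _ _ h := hG.monotone h.2
  M3 _ _ _ _ := hG.rk_join_add_rk_join_le
  M4 _ _ _ := hG.mub_nonempty_of_rk_join_eq
  M5 _ _ := hG.exists_isAtom_le_not_le_mub_nonempty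

theorem isClosureFun_atomJoin (hG : IsGeometricPoset P rk) :
    IsClosureFun (fun q : AtomJoin P => rk q.join) fun q => hG.toAtomJoin q.join := by
  refine fun q => ⟨⟨fun a ha => ⟨q.isAtom_of_mem a ha, q.le_join ha⟩, le_rfl⟩, rfl,
    fun r hqr hrk => ?_⟩
  have hrq : r.join = q.join := (hG.eq_of_le_of_rk_le hqr.2 hrk.le).symm
  exact ⟨fun a ha => ⟨r.isAtom_of_mem a ha, hrq ▸ r.le_join ha⟩, hrq.le⟩

theorem atomJoin_isSimple (hG : IsGeometricPoset P rk) :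
    ∀ q : AtomJoin P, IsAtom q → hG.toAtomJoin q.join = q ∧ rk q.join ≠ 0 := by
  intro q hq
  obtain ⟨a, ha, rfl⟩ := AtomJoin.isAtom_iff.1 hq
  refine ⟨AtomJoin.ext (Set.ext fun b => ⟨fun hb => (ha.le_iff_eq hb.1.1).1 hb.2, ?_⟩) rfl, ?_⟩
  · intro hb
    exact ⟨hb ▸ ha, hb.le⟩
  · exact (hG.rk_eq_one_of_isAtom ha).trans_ne one_ne_zero

def orderIsoFlats (hG : IsGeometricPoset P rk) :
    P ≃o Flats fun q : AtomJoin P => hG.toAtomJoin q.join where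
  toFun p := ⟨hG.toAtomJoin p, rfl⟩
  invFun f := f.1.join
  left_inv _ := rfl
  right_inv f := Subtype.ext f.2
  map_rel_iff' := ⟨fun h => h.2, fun h => ⟨fun _ ha => ⟨ha.1, ha.2.trans h⟩, h⟩⟩

end IsGeometricPoset

/-- Theorem 9.7: every geometric poset is isomorphic, as a ranked poset, to the
poset of flats of a simple matroid scheme, and two simple matroid schemes with
isomorphic posets of flats are isomorphic as matroid schemes. -/
theorem statement16 :
    (∀ (P : Type) [PartialOrder P] [OrderBot P] [Fintype P], ∀ rk : P → ℕ,
      IsGeometricPoset P rk →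
      ∃ (T : Type) (po : PartialOrder T) (ob : OrderBot T) (ft : Fintype T),
        letI := po
        letI := ob
        letI := ft
        ∃ (ρ : T → ℕ) (cl : T → T),
          IsMatroidScheme ρ ∧ IsClosureFun ρ cl ∧
          (∀ a : T, IsAtom a → cl a = a ∧ ρ a ≠ 0) ∧
          ∃ e : P ≃o {x : T // cl x = x}, ∀ p : P, rk p = ρ (e p).val) ∧
    (∀ (T T' : Type) [PartialOrder T] [OrderBot T] [Fintype T]
        [PartialOrder T'] [OrderBot T'] [Fintype T'],
      ∀ (ρ : T → ℕ) (ρ' : T' → ℕ) (cl : T → T) (cl' : T' → T'),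
      IsMatroidScheme ρ → IsMatroidScheme ρ' →
      IsClosureFun ρ cl → IsClosureFun ρ' cl' →
      (∀ a : T, IsAtom a → cl a = a ∧ ρ a ≠ 0) →
      (∀ a : T', IsAtom a → cl' a = a ∧ ρ' a ≠ 0) →
      Nonempty ({x : T // cl x = x} ≃o {x : T' // cl' x = x}) →
      ∃ ψ : T ≃o T', ∀ x : T, ρ x = ρ' (ψ x)) := by
  refine ⟨fun P _ _ _ rk hG => ?_, ?_⟩
  · exact ⟨AtomJoin P, inferInstance, inferInstance, inferInstance, _, _,
      hG.isMatroidScheme_atomJoin, hG.isClosureFun_atomJoin,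
      hG.atomJoin_isSimple, hG.orderIsoFlats, fun _ => rfl⟩
  · intro T T' _ _ _ _ _ _ ρ ρ' cl cl' hM hM' hcl hcl' hs hs' ⟨e⟩
    exact hM.exists_orderIso_of_orderIso_flats hcl hs hM' hcl' hs' e
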